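/- For a partition λ and positive integers r, s, the rs-weight of λ equals the sum over j ∈ ℤ/sℤ of the r-weights of the components λ^(j) of the s-quotient of λ. In particular, λ is an rs-core if and only if every component of its s-quotient is an r-core. -/

import Mathlib

open Classical

/-- A partition: an infinite weakly decreasing sequence of non-negative integers
with finite sum.  Here `f n` denotes the part `λ_{n+1}`. -/
structure SeqPartition where
  f : ℕ → ℕ
  antitone : ∀ ⦃m n : ℕ⦄, m ≤ n → f n ≤ f m
  eventually_zero : ∃ N, ∀ n, N ≤ n → f n = 0

instance : Inhabited SeqPartition :=
  ⟨⟨fun _ => 0, fun _ _ _ => le_rfl, ⟨0, fun _ _ => rfl⟩⟩⟩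

namespace SeqPartition

/-- The beta-set `β_r(λ) = {λ_i - i + r : i ≥ 1}`. -/
def beta (r : ℤ) (l : SeqPartition) : Set ℤ :=
  {x | ∃ n : ℕ, x = (l.f n : ℤ) - (n + 1) + r}

/-- The size `|λ|` of a partition. -/
noncomputable def size (l : SeqPartition) : ℕ := ∑ᶠ n, l.f n

/-- The partition whose beta-set (for some shift `r`) is `B`, if it exists. -/
noncomputable def ofBeta (B : Set ℤ) : SeqPartition :=
  if h : ∃ l : SeqPartition, ∃ r : ℤ, beta r l = B then h.choose else default

/-- The beta-set of the `s`-core: beads pushed up their runners as far as possible.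
A position `x` is occupied iff the number of beads of `B` weakly above it on its runner
exceeds the number of gaps strictly below it on its runner. -/
def coreBeta (s : ℕ) (B : Set ℤ) : Set ℤ :=
  {x | ({y : ℤ | y ∉ B ∧ y ≡ x [ZMOD (s : ℤ)] ∧ y < x}).ncard
      < ({b : ℤ | b ∈ B ∧ b ≡ x [ZMOD (s : ℤ)] ∧ x ≤ b}).ncard}

/-- The `s`-core of a partition. -/
noncomputable def core (s : ℕ) (l : SeqPartition) : SeqPartition :=
  ofBeta (coreBeta s (beta 0 l))

/-- `λ` is an `s`-core. -/
def IsCore (s : ℕ) (l : SeqPartition) : Prop := core s l = l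

/-- The `s`-weight of `λ`. -/
noncomputable def wt (s : ℕ) (l : SeqPartition) : ℕ := (size l - size (core s l)) / s

/-- The component of the `s`-quotient of `λ` indexed by `j : ZMod s`. -/
noncomputable def quot (s : ℕ) (l : SeqPartition) (j : ZMod s) : SeqPartition :=
  ofBeta {z : ℤ | ((j.val : ℤ) + (s : ℤ) * z) ∈ beta 0 l}

/-- The `s`-set entry `Γ_j(λ)`: the smallest integer in the class `j` mod `s`
not lying in the beta-set of the `s`-core of `λ`. -/
noncomputable def sSet (s : ℕ) (l : SeqPartition) (j : ZMod s) : ℤ :=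
  sInf {x : ℤ | (x : ZMod s) = j ∧ x ∉ beta 0 (core s l)}

/-- `λ` is an `[s:t]`-core. -/
def IsGenCore (s t : ℕ) (l : SeqPartition) : Prop :=
  wt s (core t l) = wt s l

/-- The level `t` action of the generator `w_i` of the affine symmetric group `W_s` on `ℤ`. -/
def genActZ (s t : ℕ) (i : ZMod s) (n : ℤ) : ℤ :=
  if (n : ZMod s) = (i - 1) * (t : ZMod s) - ((((s : ℤ) - 1) * ((t : ℤ) - 1) / 2 : ℤ) : ZMod s)
    then n + t
  else if (n : ZMod s) = i * (t : ZMod s) - ((((s : ℤ) - 1) * ((t : ℤ) - 1) / 2 : ℤ) : ZMod s)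
    then n - t
  else n

/-- The level `t` action of the generator `w_i` of `W_s` on partitions, via beta-sets. -/
noncomputable def genAct (s t : ℕ) (i : ZMod s) (l : SeqPartition) : SeqPartition :=
  ofBeta (genActZ s t i '' beta 0 l)

/-- The action of a word in the generators of `W_s`, at level `t`, on partitions. -/
noncomputable def wordAct (s t : ℕ) (w : List (ZMod s)) (l : SeqPartition) : SeqPartition :=
  w.foldr (genAct s t) l

/-- `λ` and `μ` lie in the same orbit for the level `t` action of `W_s`. -/
def SameOrbit (s t : ℕ) (l m : SeqPartition) : Prop :=
  ∃ w : List (ZMod s), wordAct s t w l = m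

/-- `λ` and `μ` lie in the same orbit for the commuting actions of `W_s` (level `t`)
and `W_t` (level `s`). -/
def SameOrbit2 (s t : ℕ) (l m : SeqPartition) : Prop :=
  ∃ a : List (ZMod s), ∃ b : List (ZMod t), wordAct s t a (wordAct t s b l) = m

/-- The `t`-weighted `s`-quotient of `λ`: the multiset of pairs
`(Γ_i(λ) + tℤ, λ^(i))` over `i ∈ ℤ/sℤ`. -/
noncomputable def twq (s t : ℕ) (l : SeqPartition) : Multiset (ZMod t × SeqPartition) :=
  ((List.range s).map (fun i =>
    (((sSet s l (i : ZMod s) : ℤ) : ZMod t), quot s l (i : ZMod s))) : Multiset _)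

/-- The largest `(s,t)`-core `κ_{s,t}`: the partition whose beta-set is the set of
integers not expressible as a non-negative integer combination of `s` and `t`. -/
noncomputable def kappa (s t : ℕ) : SeqPartition :=
  ofBeta {x : ℤ | ¬ ∃ a b : ℕ, x = (a : ℤ) * s + (b : ℤ) * t}

end SeqPartition

/-!
Measure a beta-set `B` against the vacuum `Iio 0` by two additive functionals: the charge
`c(B) = ∑ₓ (1_B(x) - 1_{x<0})` and the energy `E(B) = ∑ₓ (2x + 1)(1_B(x) - 1_{x<0})`. A partition
with beta-set `B` has `2|λ| = E(B) - c(B)²`. Splitting `ℤ` into residue classes mod `s` writes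
`c` and `E` as sums over the `s` runners, and the runners of the `s`-core are the initial
segments `Iio (c(runner))`, with the same charges. Comparing the two expansions gives
`|λ| = |core_s λ| + s ∑ⱼ |λ^(j)|`, i.e. `wt_s λ = ∑ⱼ |λ^(j)|`. The `r`-runners of the `i`-th
`s`-runner are the `rs`-runners `i + s k`, so the theorem follows by reindexing.
-/

theorem Finset.sum_range_mul {M : Type*} [AddCommMonoid M] (f : ℕ → M) (r s : ℕ) :
    ∑ m ∈ range (r * s), f m = ∑ i ∈ range s, ∑ k ∈ range r, f (i + s * k) := by
  induction r with
  | zero => simp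
  | succ r ih =>
    rw [Nat.succ_mul, sum_range_add, ih, ← sum_add_distrib]
    refine sum_congr rfl fun i _ => ?_
    rw [sum_range_succ, add_comm (r * s) i, mul_comm r s]

namespace SeqPartition

open Set Function

structure IsBetaSet (B : Set ℤ) : Prop where
  exists_Iio_subset : ∃ a, Iio a ⊆ B
  bddAbove : BddAbove B

/-- The `j`-th runner of the `s`-abacus. -/
def runner (s : ℕ) (j : ℤ) (B : Set ℤ) : Set ℤ := (fun z => j + s * z) ⁻¹' B

lemma runner_runner (r s : ℕ) (i k : ℤ) (B : Set ℤ) :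
    runner r k (runner s i B) = runner (s * r) (i + s * k) B := by
  ext z
  simp only [runner, mem_preimage]
  push_cast
  ring_nf

lemma runner_add_mul (s : ℕ) (j m : ℤ) (B : Set ℤ) :
    runner s (j + s * m) B = (· + m) ⁻¹' runner s j B := by
  ext z
  simp only [runner, mem_preimage]
  ring_nf

lemma runner_preimage_add (s : ℕ) (j c : ℤ) (B : Set ℤ) :
    runner s j ((· + c) ⁻¹' B) = runner s (j + c) B := by
  ext z
  simp only [runner, mem_preimage]
  ring_nf

namespace IsBetaSet

variable {B : Set ℤ}

lemma of_Iio (m : ℤ) : IsBetaSet (Iio m) := ⟨⟨m, subset_rfl⟩, bddAbove_Iio⟩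

lemma preimage_add (hB : IsBetaSet B) (c : ℤ) : IsBetaSet ((· + c) ⁻¹' B) := by
  obtain ⟨a, ha⟩ := hB.exists_Iio_subset
  obtain ⟨b, hb⟩ := hB.bddAbove
  refine ⟨⟨a - c, fun x hx => ha (by simp only [mem_Iio] at hx ⊢; omega)⟩, ⟨b - c, ?_⟩⟩
  intro x hx
  have : x + c ≤ b := hb hx
  omega

lemma runner {s : ℕ} (hs : 0 < s) (hB : IsBetaSet B) (j : ℤ) : IsBetaSet (runner s j B) := by
  obtain ⟨a, ha⟩ := hB.exists_Iio_subset
  obtain ⟨b, hb⟩ := hB.bddAbove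
  have hs' : (1 : ℤ) ≤ s := by exact_mod_cast hs
  refine ⟨⟨min (a - j) 0, fun z hz => ha ?_⟩, ⟨max (b - j) 0, fun z hz => ?_⟩⟩
  · simp only [mem_Iio, lt_min_iff] at hz ⊢
    nlinarith
  · have : j + s * z ≤ b := hb hz
    rw [le_max_iff]
    by_contra! h
    nlinarith

lemma exists_eq_Iio_union (hB : IsBetaSet B) :
    ∃ (m : ℤ) (S : Finset ℤ), (∀ x ∈ S, m ≤ x) ∧ B = Iio m ∪ S := by
  obtain ⟨m, hm⟩ := hB.exists_Iio_subset
  obtain ⟨b, hb⟩ := hB.bddAbove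
  have hfin : (B ∩ Ici m).Finite := (finite_Icc m b).subset fun x hx => ⟨hx.2, hb hx.1⟩
  refine ⟨m, hfin.toFinset, fun x hx => (hfin.mem_toFinset.1 hx).2, ?_⟩
  ext x
  simp only [mem_union, mem_Iio, Finset.mem_coe, hfin.mem_toFinset, mem_inter_iff, mem_Ici]
  by_cases hx : x < m
  · exact iff_of_true (hm hx) (Or.inl hx)
  · exact ⟨fun h => Or.inr ⟨h, by omega⟩, fun h => h.elim (absurd · hx) And.left⟩

end IsBetaSet

noncomputable def beadDiff (B : Set ℤ) : ℤ → ℤ := B.indicator 1 - (Iio 0).indicator 1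

noncomputable def beadMoment (w : ℤ → ℤ) (B : Set ℤ) : ℤ := ∑ᶠ x, w x * beadDiff B x

noncomputable def charge (B : Set ℤ) : ℤ := beadMoment 1 B

noncomputable def energy (B : Set ℤ) : ℤ := beadMoment (fun x => 2 * x + 1) B

lemma IsBetaSet.hasFiniteSupport_beadDiff {B : Set ℤ} (hB : IsBetaSet B) :
    HasFiniteSupport (beadDiff B) := by
  obtain ⟨a, ha⟩ := hB.exists_Iio_subset
  obtain ⟨b, hb⟩ := hB.bddAbove
  refine (finite_Icc (min a 0) (max b 0)).subset fun x hx => ?_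
  rw [mem_support] at hx
  refine ⟨le_of_not_gt fun h => hx ?_, le_of_not_gt fun h => hx ?_⟩
  · have hxB : x ∈ B := ha (lt_of_lt_of_le h (min_le_left _ _))
    have hx0 : x < 0 := lt_of_lt_of_le h (min_le_right _ _)
    simp [beadDiff, hxB, hx0]
  · have hxB : x ∉ B := fun hx' => (hb hx').not_gt (lt_of_le_of_lt (le_max_left _ _) h)
    have hx0 : ¬x < 0 := not_lt.2 ((le_max_right _ _).trans h.le)
    simp [beadDiff, hxB, hx0]

lemma IsBetaSet.hasFiniteSupport_mul_beadDiff {B : Set ℤ} (hB : IsBetaSet B) (w : ℤ → ℤ) :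
    HasFiniteSupport fun x => w x * beadDiff B x :=
  hB.hasFiniteSupport_beadDiff.subset (support_mul_subset_right _ _)

lemma beadMoment_Iio_zero (w : ℤ → ℤ) : beadMoment w (Iio 0) = 0 := by
  simp [beadMoment, beadDiff]

lemma beadMoment_insert {B : Set ℤ} (hB : IsBetaSet B) (w : ℤ → ℤ) {a : ℤ} (ha : a ∉ B) :
    beadMoment w (insert a B) = beadMoment w B + w a := by
  have hdiff : beadDiff (insert a B) = beadDiff B + (Pi.single a 1 : ℤ → ℤ) := by
    ext x
    rcases eq_or_ne x a with rfl | hx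
    · simp [beadDiff, ha, neg_add_eq_sub]
    · simp [beadDiff, hx, indicator_apply]
  have hsingle : HasFiniteSupport fun x => w x * (Pi.single a 1 : ℤ → ℤ) x :=
    (finite_singleton a).subset ((support_mul_subset_right _ _).trans Pi.support_single_subset)
  simp only [beadMoment, hdiff, Pi.add_apply, mul_add]
  rw [finsum_add_distrib (hB.hasFiniteSupport_mul_beadDiff w) hsingle,
    finsum_eq_single (fun x => w x * (Pi.single a 1 : ℤ → ℤ) x) a fun x hx => by simp [hx]]
  simp

lemma beadMoment_Iio_add_one (w : ℤ → ℤ) (m : ℤ) :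
    beadMoment w (Iio (m + 1)) = beadMoment w (Iio m) + w m := by
  have : Iio (m + 1) = insert m (Iio m) := by
    ext x
    simp only [mem_Iio, mem_insert_iff]
    omega
  rw [this, beadMoment_insert (IsBetaSet.of_Iio m) w (lt_irrefl m)]

lemma charge_Iio (m : ℤ) : charge (Iio m) = m := by
  induction m using Int.induction_on with
  | zero => exact beadMoment_Iio_zero _
  | succ m ih => rw [charge, beadMoment_Iio_add_one, ← charge, ih]; rfl
  | pred m ih =>
    rw [charge, ← sub_add_cancel (-(m : ℤ)) 1, beadMoment_Iio_add_one, ← charge] at ih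
    simp only [Pi.one_apply] at ih
    omega

lemma energy_Iio (m : ℤ) : energy (Iio m) = m ^ 2 := by
  induction m using Int.induction_on with
  | zero => exact beadMoment_Iio_zero _
  | succ m ih => rw [energy, beadMoment_Iio_add_one, ← energy, ih]; ring
  | pred m ih =>
    rw [energy, ← sub_add_cancel (-(m : ℤ)) 1, beadMoment_Iio_add_one, ← energy] at ih
    linear_combination ih

lemma beadDiff_runner {s : ℕ} (B : Set ℤ) {k : ℤ} (hk0 : 0 ≤ k) (hks : k < s) (z : ℤ) :
    beadDiff B (k + s * z) = beadDiff (runner s k B) z := by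
  have hneg : k + s * z < 0 ↔ z < 0 := by
    constructor
    · intro h
      by_contra! hz
      nlinarith
    · intro h
      nlinarith
  simp only [beadDiff, Pi.sub_apply, indicator_apply, mem_Iio, hneg, runner, mem_preimage,
    Pi.one_apply]

lemma beadMoment_eq_sum_runner {s : ℕ} (hs : 0 < s) {B : Set ℤ} (hB : IsBetaSet B)
    (w : ℤ → ℤ) :
    beadMoment w B =
      ∑ k ∈ Finset.range s, beadMoment (fun z => w (k + s * z)) (runner s k B) := by
  have : NeZero s := ⟨hs.ne'⟩
  let e : Fin s × ℤ ≃ ℤ := (Equiv.prodComm _ _).trans (Int.divModEquiv s).symm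
  have he : ∀ p, e p = p.1 + s * p.2 := fun p => by
    simp [e, Int.divModEquiv, mul_comm, add_comm]
  have hsupp : HasFiniteSupport fun p => w (e p) * beadDiff B (e p) :=
    (hB.hasFiniteSupport_mul_beadDiff w).preimage e.injective.injOn
  rw [beadMoment, ← finsum_comp_equiv e, finsum_curry _ hsupp, finsum_eq_sum_of_fintype,
    ← Fin.sum_univ_eq_sum_range]
  refine Finset.sum_congr rfl fun k _ => finsum_congr fun z => ?_
  rw [he, beadDiff_runner B (by positivity) (by exact_mod_cast k.isLt)]

lemma charge_eq_sum_runner {s : ℕ} (hs : 0 < s) {B : Set ℤ} (hB : IsBetaSet B) :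
    charge B = ∑ k ∈ Finset.range s, charge (runner s k B) :=
  beadMoment_eq_sum_runner hs hB 1

lemma energy_eq_sum_runner {s : ℕ} (hs : 0 < s) {B : Set ℤ} (hB : IsBetaSet B) :
    energy B = s * ∑ k ∈ Finset.range s, energy (runner s k B) +
      ∑ k ∈ Finset.range s, (2 * k + 1 - s) * charge (runner s k B) := by
  rw [energy, beadMoment_eq_sum_runner hs hB, Finset.mul_sum, ← Finset.sum_add_distrib]
  refine Finset.sum_congr rfl fun k _ => ?_
  have hR := hB.runner hs k
  simp only [energy, charge, beadMoment, mul_finsum, Pi.one_apply, one_mul, ← mul_assoc]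
  rw [← finsum_add_distrib (hR.hasFiniteSupport_mul_beadDiff _)
    (hR.hasFiniteSupport_mul_beadDiff _)]
  exact finsum_congr fun z => by ring

lemma charge_preimage_add {B : Set ℤ} (hB : IsBetaSet B) (c : ℤ) :
    charge ((· + c) ⁻¹' B) = charge B - c := by
  have hdiff : ∀ x, beadDiff ((· + c) ⁻¹' B) x = beadDiff B (x + c) + beadDiff (Iio (-c)) x := by
    intro x
    simp only [beadDiff, Pi.sub_apply, indicator_apply, mem_preimage, mem_Iio, Pi.one_apply]
    split_ifs <;> omega
  have hshift : HasFiniteSupport fun x => beadDiff B (x + c) :=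
    hB.hasFiniteSupport_beadDiff.preimage (add_left_injective c).injOn
  have hIio := charge_Iio (-c)
  simp only [charge, beadMoment, Pi.one_apply, one_mul, hdiff] at hIio ⊢
  rw [finsum_add_distrib hshift (IsBetaSet.of_Iio _).hasFiniteSupport_beadDiff, hIio,
    sub_eq_add_neg]
  exact congrArg (· + -c) (finsum_comp_equiv (Equiv.addRight c))

lemma charge_mono {B B' : Set ℤ} (hB : IsBetaSet B) (hB' : IsBetaSet B') (h : B ⊆ B') :
    charge B ≤ charge B' := by
  simp only [charge, beadMoment, Pi.one_apply, one_mul]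
  refine finsum_le_finsum' hB.hasFiniteSupport_beadDiff hB'.hasFiniteSupport_beadDiff fun x => ?_
  exact sub_le_sub_right (indicator_le_indicator_of_subset h (fun _ => zero_le_one' ℤ) x) _

lemma finsum_indicator_one_eq_ncard {α : Type*} {S : Set α} (hS : S.Finite) :
    ∑ᶠ x, S.indicator (1 : α → ℤ) x = S.ncard := by
  rw [← finsum_mem_def, finsum_mem_eq_finite_toFinset_sum _ hS, ncard_eq_toFinset_card _ hS]
  simp

lemma charge_eq_ncard_sub_ncard {B : Set ℤ} (hB : IsBetaSet B) :
    charge B = ((B ∩ Ici 0).ncard : ℤ) - (Bᶜ ∩ Iio 0).ncard := by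
  obtain ⟨a, ha⟩ := hB.exists_Iio_subset
  obtain ⟨b, hb⟩ := hB.bddAbove
  have hbeads : (B ∩ Ici 0).Finite := (finite_Icc 0 b).subset fun x hx => ⟨hx.2, hb hx.1⟩
  have hgaps : (Bᶜ ∩ Iio 0).Finite :=
    (finite_Ico a 0).subset fun x hx => ⟨le_of_not_gt fun h => hx.1 (ha h), hx.2⟩
  have hdiff : beadDiff B = (B ∩ Ici 0).indicator 1 - (Bᶜ ∩ Iio 0).indicator 1 := by
    ext x
    rcases le_or_gt 0 x with h0 | h0 <;> by_cases hx : x ∈ B <;>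
      simp [beadDiff, hx, h0, not_lt.2, not_le.2]
  simp only [charge, beadMoment, Pi.one_apply, one_mul, hdiff, Pi.sub_apply]
  rw [finsum_sub_distrib (hbeads.subset (support_indicator_subset))
    (hgaps.subset (support_indicator_subset)), finsum_indicator_one_eq_ncard hbeads,
    finsum_indicator_one_eq_ncard hgaps]

@[ext]
lemma ext {l l' : SeqPartition} (h : l.f = l'.f) : l = l' := by
  cases l
  cases l'
  subst h
  rfl

lemma preimage_add_beta (c r : ℤ) (l : SeqPartition) :
    (· + c) ⁻¹' beta r l = beta (r - c) l := by
  ext x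
  simp only [beta, mem_preimage, mem_ofPred_eq]
  constructor <;> rintro ⟨n, hn⟩ <;> exact ⟨n, by omega⟩

lemma beta_default (c : ℤ) : beta c default = Iio c := by
  ext x
  simp only [beta, mem_ofPred_eq, mem_Iio]
  constructor
  · rintro ⟨n, rfl⟩
    change ((0 : ℕ) : ℤ) - (n + 1) + c < c
    omega
  · intro hx
    refine ⟨(c - 1 - x).toNat, ?_⟩
    change x = ((0 : ℕ) : ℤ) - ((c - 1 - x).toNat + 1) + c
    omega

lemma isBetaSet_beta (r : ℤ) (l : SeqPartition) : IsBetaSet (beta r l) := by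
  obtain ⟨N, hN⟩ := l.eventually_zero
  refine ⟨⟨r - N, fun x hx => ⟨(r - 1 - x).toNat, ?_⟩⟩, ⟨l.f 0 - 1 + r, ?_⟩⟩
  · rw [mem_Iio] at hx
    rw [hN _ (by omega)]
    omega
  · rintro _ ⟨n, rfl⟩
    have := l.antitone (Nat.zero_le n)
    omega

lemma size_eq_sum_range (l : SeqPartition) {N : ℕ} (hN : ∀ n, N ≤ n → l.f n = 0) :
    size l = ∑ n ∈ Finset.range N, l.f n :=
  finsum_eq_sum_of_support_subset _ fun n hn => by
    simpa using lt_of_not_ge fun h => hn (hN n h)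

lemma size_default : size default = 0 := finsum_zero

lemma eq_default_of_size_eq_zero {l : SeqPartition} (h : size l = 0) : l = default := by
  obtain ⟨N, hN⟩ := l.eventually_zero
  rw [size_eq_sum_range l hN, Finset.sum_eq_zero_iff] at h
  ext n
  by_cases hn : n < N
  · exact h n (Finset.mem_range.2 hn)
  · exact hN n (not_lt.1 hn)

lemma beta_inj {r r' : ℤ} {l l' : SeqPartition} (h : beta r l = beta r' l') :
    r = r' ∧ l = l' := by
  let b (l : SeqPartition) (r : ℤ) (n : ℕ) : ℤᵒᵈ := OrderDual.toDual ((l.f n : ℤ) - (n + 1) + r)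
  have hmono (l : SeqPartition) (r : ℤ) : StrictMono (b l r) :=
    strictMono_nat_of_lt_succ fun n => by
      have := l.antitone (Nat.le_add_right n 1)
      simp only [b, OrderDual.toDual_lt_toDual]
      push_cast
      omega
  have hrange (l : SeqPartition) (r : ℤ) : range (b l r) = OrderDual.ofDual ⁻¹' beta r l := by
    ext y
    simp only [b, mem_range, beta, mem_preimage, mem_ofPred_eq]
    exact exists_congr fun n => by rw [eq_comm]; rfl
  have hb := (StrictMono.range_inj (hmono l r) (hmono l' r')).1 (by rw [hrange, hrange, h])
  have hn (n : ℕ) : (l.f n : ℤ) - (n + 1) + r = l'.f n - (n + 1) + r' := congrFun hb n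
  obtain ⟨N, hN⟩ := l.eventually_zero
  obtain ⟨N', hN'⟩ := l'.eventually_zero
  have hr : r = r' := by
    have := hn (max N N')
    rw [hN _ (le_max_left N N'), hN' _ (le_max_right N N')] at this
    omega
  exact ⟨hr, ext (funext fun n => by have := hn n; omega)⟩

def cons (k : ℕ) (l : SeqPartition) (hk : l.f 0 ≤ k) : SeqPartition where
  f
    | 0 => k
    | n + 1 => l.f n
  antitone := by
    rintro (_ | m) (_ | n) h
    · exact le_rfl
    · exact (l.antitone (Nat.zero_le n)).trans hk
    · omega
    · exact l.antitone (by omega)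
  eventually_zero := by
    obtain ⟨N, hN⟩ := l.eventually_zero
    exact ⟨N + 1, fun | 0, h => by omega | n + 1, h => hN n (by omega)⟩

lemma beta_cons (c : ℤ) (k : ℕ) (l : SeqPartition) (hk : l.f 0 ≤ k) :
    beta (c + 1) (cons k l hk) = insert (k + c) (beta c l) := by
  ext x
  simp only [beta, mem_ofPred_eq, mem_insert_iff]
  constructor
  · rintro ⟨_ | n, rfl⟩
    · exact Or.inl (by simp [cons])
    · exact Or.inr ⟨n, by simp only [cons]; push_cast; ring⟩
  · rintro (rfl | ⟨n, rfl⟩)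
    · exact ⟨0, by simp [cons]⟩
    · exact ⟨n + 1, by simp only [cons]; push_cast; ring⟩

lemma size_cons (k : ℕ) (l : SeqPartition) (hk : l.f 0 ≤ k) : size (cons k l hk) = k + size l := by
  obtain ⟨N, hN⟩ := l.eventually_zero
  rw [size_eq_sum_range l hN, size_eq_sum_range (cons k l hk) (N := N + 1)
    fun | 0, h => by omega | n + 1, h => hN n (by omega), Finset.sum_range_succ']
  simp only [cons]
  ring

lemma charge_insert {B : Set ℤ} (hB : IsBetaSet B) {a : ℤ} (ha : a ∉ B) :
    charge (insert a B) = charge B + 1 :=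
  beadMoment_insert hB 1 ha

lemma energy_insert {B : Set ℤ} (hB : IsBetaSet B) {a : ℤ} (ha : a ∉ B) :
    energy (insert a B) = energy B + (2 * a + 1) :=
  beadMoment_insert hB _ ha

theorem exists_beta_eq {B : Set ℤ} (hB : IsBetaSet B) :
    ∃ l, beta (charge B) l = B ∧ 2 * (size l : ℤ) = energy B - charge B ^ 2 := by
  obtain ⟨m, S, hSm, rfl⟩ := hB.exists_eq_Iio_union
  clear hB
  induction S using Finset.induction_on_max with
  | empty =>
    refine ⟨default, ?_, ?_⟩ <;>
      simp [charge_Iio, energy_Iio, beta_default, size_default]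
  | insert a S haS ih =>
    obtain ⟨l, hl, hsize⟩ := ih fun x hx => hSm x (Finset.mem_insert_of_mem hx)
    have hB : IsBetaSet (Iio m ∪ ↑S) := hl ▸ isBetaSet_beta _ l
    have hmax : ∀ x ∈ Iio m ∪ ↑S, x < a := by
      rintro x (hx | hx)
      · exact lt_of_lt_of_le hx (hSm a (Finset.mem_insert_self a S))
      · exact haS x hx
    have heq : Iio m ∪ ↑(insert a S) = insert a (Iio m ∪ ↑S) := by
      rw [Finset.coe_insert, union_insert]
    have hfirst : (l.f 0 : ℤ) - 1 + charge (Iio m ∪ ↑S) < a :=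
      hmax _ (hl.subset ⟨0, by push_cast; ring⟩)
    have hk : l.f 0 ≤ (a - charge (Iio m ∪ ↑S)).toNat := by omega
    have ha : a ∉ Iio m ∪ ↑S := fun h => lt_irrefl a (hmax a h)
    -- `a` lies above every bead, so it is the bead of a new first part `a - c`.
    refine ⟨cons _ l hk, ?_, ?_⟩
    · rw [heq, charge_insert hB ha, beta_cons, hl]
      congr 1
      omega
    · rw [heq, charge_insert hB ha, energy_insert hB ha, size_cons]
      push_cast
      rw [Int.toNat_of_nonneg (by omega)]
      linear_combination hsize

lemma charge_beta (r : ℤ) (l : SeqPartition) : charge (beta r l) = r := by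
  obtain ⟨l', h, -⟩ := exists_beta_eq (isBetaSet_beta r l)
  exact (beta_inj h).1

lemma two_mul_size (r : ℤ) (l : SeqPartition) :
    2 * (size l : ℤ) = energy (beta r l) - r ^ 2 := by
  obtain ⟨l', h, hsize⟩ := exists_beta_eq (isBetaSet_beta r l)
  obtain ⟨-, rfl⟩ := beta_inj h
  rwa [charge_beta] at hsize

lemma ofBeta_beta (r : ℤ) (l : SeqPartition) : ofBeta (beta r l) = l := by
  have h : ∃ l' r', beta r' l' = beta r l := ⟨l, r, rfl⟩
  rw [ofBeta, dif_pos h]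
  exact (beta_inj h.choose_spec.choose_spec).2

lemma beta_charge_ofBeta {B : Set ℤ} (hB : IsBetaSet B) : beta (charge B) (ofBeta B) = B := by
  obtain ⟨l, hl, -⟩ := exists_beta_eq hB
  rw [← hl, ofBeta_beta, charge_beta]

lemma two_mul_size_ofBeta {B : Set ℤ} (hB : IsBetaSet B) :
    2 * (size (ofBeta B) : ℤ) = energy B - charge B ^ 2 := by
  rw [two_mul_size (charge B), beta_charge_ofBeta hB]

lemma ofBeta_preimage_add {B : Set ℤ} (hB : IsBetaSet B) (c : ℤ) :
    ofBeta ((· + c) ⁻¹' B) = ofBeta B := by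
  conv_lhs => rw [← beta_charge_ofBeta hB, preimage_add_beta, ofBeta_beta]

lemma beta_zero_ofBeta {B : Set ℤ} (hB : IsBetaSet B) :
    beta 0 (ofBeta B) = (· + charge B) ⁻¹' B := by
  conv_rhs => rw [← beta_charge_ofBeta hB, preimage_add_beta, charge_beta, sub_self]

lemma eq_Iio_of_size_ofBeta_eq_zero {B : Set ℤ} (hB : IsBetaSet B) (h : size (ofBeta B) = 0) :
    B = Iio (charge B) := by
  conv_lhs => rw [← beta_charge_ofBeta hB, eq_default_of_size_eq_zero h, beta_default]

lemma mem_coreBeta_iff {s : ℕ} (hs : 0 < s) {B : Set ℤ} (hB : IsBetaSet B) (x : ℤ) :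
    x ∈ coreBeta s B ↔ 0 < charge (runner s x B) := by
  have hs' : (0 : ℤ) < s := by exact_mod_cast hs
  have hinj : Injective fun w : ℤ => x + s * w := fun u v h =>
    mul_left_cancel₀ hs'.ne' (add_left_cancel h)
  have hneg (w : ℤ) : x + s * w < x ↔ w < 0 := by
    constructor <;> intro h <;> nlinarith
  have hmodEq (w : ℤ) : x + s * w ≡ x [ZMOD s] := Int.modEq_iff_dvd.2 ⟨-w, by ring⟩
  have hclass {y : ℤ} (hy : y ≡ x [ZMOD s]) : ∃ w, x + s * w = y := by
    obtain ⟨w, hw⟩ := Int.modEq_iff_dvd.1 hy.symm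
    exact ⟨w, by omega⟩
  have hgaps : {y : ℤ | y ∉ B ∧ y ≡ x [ZMOD s] ∧ y < x} =
      (fun w => x + s * w) '' ((runner s x B)ᶜ ∩ Iio 0) := by
    ext y
    constructor
    · rintro ⟨hyB, hyx, hlt⟩
      obtain ⟨w, rfl⟩ := hclass hyx
      exact ⟨w, ⟨hyB, (hneg w).1 hlt⟩, rfl⟩
    · rintro ⟨w, ⟨hw, hw0⟩, rfl⟩
      exact ⟨hw, hmodEq w, (hneg w).2 hw0⟩
  have hbeads : {y : ℤ | y ∈ B ∧ y ≡ x [ZMOD s] ∧ x ≤ y} =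
      (fun w => x + s * w) '' (runner s x B ∩ Ici 0) := by
    ext y
    constructor
    · rintro ⟨hyB, hyx, hle⟩
      obtain ⟨w, rfl⟩ := hclass hyx
      exact ⟨w, ⟨hyB, not_lt.1 fun h => (not_lt.2 hle) ((hneg w).2 h)⟩, rfl⟩
    · rintro ⟨w, ⟨hw, hw0⟩, rfl⟩
      exact ⟨hw, hmodEq w, not_lt.1 fun h => (not_lt.2 (mem_Ici.1 hw0)) ((hneg w).1 h)⟩
  rw [coreBeta, mem_ofPred_eq, hgaps, hbeads, ncard_image_of_injective _ hinj,
    ncard_image_of_injective _ hinj, charge_eq_ncard_sub_ncard (hB.runner hs x)]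
  omega

lemma IsBetaSet.coreBeta {s : ℕ} (hs : 0 < s) {B : Set ℤ} (hB : IsBetaSet B) :
    IsBetaSet (coreBeta s B) := by
  obtain ⟨a, ha⟩ := hB.exists_Iio_subset
  obtain ⟨b, hb⟩ := hB.bddAbove
  have hs' : (0 : ℤ) < s := by exact_mod_cast hs
  refine ⟨⟨a, fun x hx => (mem_coreBeta_iff hs hB x).2 ?_⟩, ⟨b, fun x hx => ?_⟩⟩
  · have hsub : Iio 1 ⊆ SeqPartition.runner s x B := fun w hw =>
      ha (show x + s * w < a by nlinarith [mem_Iio.1 hw, mem_Iio.1 hx])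
    have := charge_mono (IsBetaSet.of_Iio 1) (hB.runner hs x) hsub
    rw [charge_Iio] at this
    omega
  · by_contra! hbx
    have hsub : SeqPartition.runner s x B ⊆ Iio 0 := fun w hw => by
      have : x + s * w ≤ b := hb hw
      rw [mem_Iio]
      nlinarith
    have := charge_mono (hB.runner hs x) (IsBetaSet.of_Iio 0) hsub
    rw [charge_Iio] at this
    exact (not_lt.2 this) ((mem_coreBeta_iff hs hB x).1 hx)

lemma runner_coreBeta {s : ℕ} (hs : 0 < s) {B : Set ℤ} (hB : IsBetaSet B) (j : ℤ) :
    runner s j (coreBeta s B) = Iio (charge (runner s j B)) := by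
  ext z
  rw [runner, mem_preimage, mem_coreBeta_iff hs hB, runner_add_mul,
    charge_preimage_add (hB.runner hs j), mem_Iio]
  omega

lemma coreBeta_preimage_add {s : ℕ} (hs : 0 < s) {B : Set ℤ} (hB : IsBetaSet B) (c : ℤ) :
    coreBeta s ((· + c) ⁻¹' B) = (· + c) ⁻¹' coreBeta s B := by
  ext x
  rw [mem_coreBeta_iff hs (hB.preimage_add c), mem_preimage, mem_coreBeta_iff hs hB,
    runner_preimage_add]

lemma core_ofBeta {s : ℕ} (hs : 0 < s) {B : Set ℤ} (hB : IsBetaSet B) :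
    core s (ofBeta B) = ofBeta (coreBeta s B) := by
  rw [core, beta_zero_ofBeta hB, coreBeta_preimage_add hs hB, ofBeta_preimage_add (hB.coreBeta hs)]

theorem size_ofBeta_eq {s : ℕ} (hs : 0 < s) {B : Set ℤ} (hB : IsBetaSet B) :
    size (ofBeta B) = s * ∑ k ∈ Finset.range s, size (ofBeta (runner s k B)) +
      size (ofBeta (coreBeta s B)) := by
  have hC := hB.coreBeta hs
  have hcharge : charge (coreBeta s B) = charge B := by
    rw [charge_eq_sum_runner hs hC, charge_eq_sum_runner hs hB]
    simp only [runner_coreBeta hs hB, charge_Iio]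
  have henergy : energy (coreBeta s B) = s * ∑ k ∈ Finset.range s, charge (runner s k B) ^ 2 +
      ∑ k ∈ Finset.range s, (2 * k + 1 - s) * charge (runner s k B) := by
    rw [energy_eq_sum_runner hs hC]
    simp only [runner_coreBeta hs hB, charge_Iio, energy_Iio]
  have hrunners : 2 * ∑ k ∈ Finset.range s, (size (ofBeta (runner s k B)) : ℤ) =
      ∑ k ∈ Finset.range s, energy (runner s k B) -
        ∑ k ∈ Finset.range s, charge (runner s k B) ^ 2 := by
    rw [Finset.mul_sum, ← Finset.sum_sub_distrib]
    exact Finset.sum_congr rfl fun k _ => two_mul_size_ofBeta (hB.runner hs k)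
  have key : 2 * (size (ofBeta B) : ℤ) = 2 * (s * ∑ k ∈ Finset.range s,
      (size (ofBeta (runner s k B)) : ℤ) + size (ofBeta (coreBeta s B))) := by
    linear_combination two_mul_size_ofBeta hB - two_mul_size_ofBeta hC - (s : ℤ) * hrunners +
      energy_eq_sum_runner hs hB - henergy + (charge (coreBeta s B) + charge B) * hcharge
  exact_mod_cast (mul_right_injective₀ two_ne_zero key : _)

theorem wt_ofBeta {s : ℕ} (hs : 0 < s) {B : Set ℤ} (hB : IsBetaSet B) :
    wt s (ofBeta B) = ∑ k ∈ Finset.range s, size (ofBeta (runner s k B)) := by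
  rw [wt, core_ofBeta hs hB, size_ofBeta_eq hs hB, Nat.add_sub_cancel,
    Nat.mul_div_cancel_left _ hs]

lemma wt_eq_sum_size_runner {s : ℕ} (hs : 0 < s) (l : SeqPartition) :
    wt s l = ∑ k ∈ Finset.range s, size (ofBeta (runner s k (beta 0 l))) := by
  conv_lhs => rw [← ofBeta_beta 0 l]
  exact wt_ofBeta hs (isBetaSet_beta 0 l)

lemma quot_natCast {s k : ℕ} (hk : k < s) (l : SeqPartition) :
    quot s l k = ofBeta (runner s k (beta 0 l)) := by
  rw [quot, ZMod.val_cast_of_lt hk]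
  rfl

theorem isCore_iff_wt_eq_zero {s : ℕ} (hs : 0 < s) (l : SeqPartition) :
    IsCore s l ↔ wt s l = 0 := by
  refine ⟨fun h => by rw [wt, show core s l = l from h, Nat.sub_self, Nat.zero_div], fun h => ?_⟩
  have hB := isBetaSet_beta 0 l
  rw [wt_eq_sum_size_runner hs, Finset.sum_eq_zero_iff] at h
  have hs' : (0 : ℤ) < s := by exact_mod_cast hs
  have hrunner (x : ℤ) : runner s x (beta 0 l) = Iio (charge (runner s x (beta 0 l))) := by
    refine eq_Iio_of_size_ofBeta_eq_zero (hB.runner hs x) ?_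
    have hx : runner s x (beta 0 l) = (· + x / s) ⁻¹' runner s (x % s) (beta 0 l) := by
      rw [← runner_add_mul, Int.emod_add_mul_ediv]
    have hxs : ((x % s).toNat : ℤ) = x % s := Int.toNat_of_nonneg (Int.emod_nonneg x hs'.ne')
    rw [hx, ofBeta_preimage_add (hB.runner hs _), ← hxs]
    have hlt := Int.emod_lt_of_pos x hs'
    exact h _ (Finset.mem_range.2 (by omega))
  have hcore : coreBeta s (beta 0 l) = beta 0 l := by
    ext x
    rw [mem_coreBeta_iff hs hB, show x ∈ beta 0 l ↔ (0 : ℤ) ∈ runner s x (beta 0 l) by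
      simp [runner]]
    conv_rhs => rw [hrunner x]
    rfl
  change core s l = l
  rw [core, hcore, ofBeta_beta]

end SeqPartition

open SeqPartition in
/-- `wt_{rs}(λ) = Σ_{j ∈ ℤ/sℤ} wt_r(λ^(j))`; in particular `λ` is an `rs`-core iff
every component of its `s`-quotient is an `r`-core. -/
theorem wt_mul_eq_sum_quot (r s : ℕ) (hr : 0 < r) (hs : 0 < s) (l : SeqPartition) :
    wt (r * s) l = ∑ i ∈ Finset.range s, wt r (quot s l (i : ZMod s)) ∧
    (IsCore (r * s) l ↔ ∀ j : ZMod s, IsCore r (quot s l j)) := by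
  have : NeZero s := ⟨hs.ne'⟩
  have hwt : wt (r * s) l = ∑ i ∈ Finset.range s, wt r (quot s l (i : ZMod s)) := by
    rw [wt_eq_sum_size_runner (Nat.mul_pos hr hs), Finset.sum_range_mul]
    refine Finset.sum_congr rfl fun i hi => ?_
    rw [quot_natCast (Finset.mem_range.1 hi), wt_ofBeta hr ((isBetaSet_beta 0 l).runner hs i)]
    refine Finset.sum_congr rfl fun k _ => ?_
    rw [runner_runner, mul_comm s r]
    push_cast
    rfl
  refine ⟨hwt, ?_⟩
  rw [isCore_iff_wt_eq_zero (Nat.mul_pos hr hs), hwt, Finset.sum_eq_zero_iff]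
  constructor
  · intro h j
    rw [isCore_iff_wt_eq_zero hr, ← ZMod.natCast_zmod_val j]
    exact h j.val (Finset.mem_range.2 (ZMod.val_lt j))
  · intro h i _
    exact (isCore_iff_wt_eq_zero hr _).1 (h i)
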